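/- Let f : ℝ^d → ℝ be three times continuously differentiable on an open set containing the point x, and let σ² ≥ 0. On a probability space, for j = 1, 2, 3, … let Δ_j be i.i.d. uniformly distributed on {−1,1}^d and let ε_j⁺, ε_j⁻ be real random variables with mean zero and variance at most σ², such that the whole family {Δ_j, ε_j⁺, ε_j⁻ : j ≥ 1} is mutually independent. For h > 0 and ℓ ∈ ℕ, ℓ ≥ 1, define the simultaneous perturbation gradient estimator ∇̂f(x) = (1/ℓ) Σ_{j=1}^{ℓ} ((f(x+hΔ_j) + ε_j⁺ − f(x−hΔ_j) − ε_j⁻)/(2h)) Δ_j ∈ ℝ^d. Then there exist constants C > 0 and h₀ > 0 such that for every 0 < h < h₀ and every ℓ ≥ 1, E‖∇̂f(x) − E[∇̂f(x)]‖² ≤ C/(ℓ h²), where ‖·‖ is the Euclidean norm. -/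

import Mathlib

/-!
The estimator is the sample mean of the `ℓ` independent random vectors
`Z_j = ((f(x + hΔ_j) + ε⁺_j - f(x - hΔ_j) - ε⁻_j) / 2h) Δ_j`. Coordinatewise, variances of
independent summands add, so `E‖∇̂ - E∇̂‖² ≤ max_j E‖Z_j‖² / ℓ`. As `‖Δ_j‖² = d`,
`E‖Z_j‖² = d E[(f(x + hΔ_j) - f(x - hΔ_j) + ε⁺_j - ε⁻_j)²] / 4h²`; for small `h` the points
`x ± hΔ_j` lie in a ball on which `f` is bounded, and the noises have second moments at most
`σ²`, so this is `O(1/h²)`.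
-/

open Finset MeasureTheory ProbabilityTheory
open scoped ENNReal

/-- The sign vector in `ℝ^d` associated with a Boolean vector: `1` where `true`, `-1` where
`false`. Ranging over all `s : Fin d → Bool` ranges over all sign vectors `Δ ∈ {-1,1}^d`. -/
noncomputable def signVec (d : ℕ) (s : Fin d → Bool) : EuclideanSpace ℝ (Fin d) :=
  WithLp.toLp 2 (fun k => if s k then 1 else -1)

/-- Index-dependent codomain for the joint family `(Δ_j, ε_j⁺, ε_j⁻)_j`: perturbation vectors
(encoded as Boolean vectors) on the first summand, real noises on the other two. -/
abbrev SPFam (d : ℕ) : ℕ ⊕ ℕ ⊕ ℕ → Type :=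
  Sum.elim (fun _ => Fin d → Bool) (Sum.elim (fun _ => ℝ) (fun _ => ℝ))

def spFamMS (d : ℕ) : ∀ i : ℕ ⊕ ℕ ⊕ ℕ, MeasurableSpace (SPFam d i)
  | Sum.inl _ => (inferInstance : MeasurableSpace (Fin d → Bool))
  | Sum.inr (Sum.inl _) => (inferInstance : MeasurableSpace ℝ)
  | Sum.inr (Sum.inr _) => (inferInstance : MeasurableSpace ℝ)

/-- The whole family `{Δ_j, ε_j⁺, ε_j⁻ : j}` as a single indexed family of random variables, so
that its mutual independence can be stated. -/
def spFam {Ω : Type*} (d : ℕ) (Δ : ℕ → Ω → (Fin d → Bool)) (εp εm : ℕ → Ω → ℝ) :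
    ∀ i : ℕ ⊕ ℕ ⊕ ℕ, Ω → SPFam d i
  | Sum.inl j => Δ j
  | Sum.inr (Sum.inl j) => εp j
  | Sum.inr (Sum.inr j) => εm j

theorem ContinuousAt.exists_forall_dist_lt_abs_le {X : Type*} [PseudoMetricSpace X]
    {f : X → ℝ} {x : X} (hf : ContinuousAt f x) :
    ∃ δ > 0, ∃ M, ∀ y, dist y x < δ → |f y| ≤ M := by
  obtain ⟨δ, hδ, hball⟩ := Metric.continuousAt_iff.mp hf 1 one_pos
  refine ⟨δ, hδ, |f x| + 1, fun y hy => ?_⟩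
  have hfy := hball hy
  rw [Real.dist_eq] at hfy
  linarith [abs_sub_abs_le_abs_sub (f y) (f x)]

theorem MeasureTheory.MemLp.euclideanSpace_apply {Ω ι : Type*} [MeasurableSpace Ω]
    {μ : Measure Ω} [Fintype ι] {p : ℝ≥0∞} {V : Ω → EuclideanSpace ℝ ι} (hV : MemLp V p μ)
    (k : ι) : MemLp (fun ω => V ω k) p μ :=
  hV.continuousLinearMap_comp (EuclideanSpace.proj (𝕜 := ℝ) k)

namespace ProbabilityTheory

variable {Ω ι κ E : Type*} [MeasurableSpace Ω] {μ : Measure Ω}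

/-- `E‖V - E V‖²`, the trace of the covariance of a random vector. -/
noncomputable def totalVariance [NormedAddCommGroup E] [NormedSpace ℝ E] (V : Ω → E)
    (μ : Measure Ω) : ℝ :=
  ∫ ω, ‖V ω - ∫ ω', V ω' ∂μ‖ ^ 2 ∂μ

theorem totalVariance_smul [NormedAddCommGroup E] [NormedSpace ℝ E] (c : ℝ) (V : Ω → E) :
    totalVariance (c • V) μ = c ^ 2 * totalVariance V μ := by
  simp only [totalVariance, Pi.smul_apply, integral_smul, ← smul_sub, norm_smul, mul_pow,
    Real.norm_eq_abs, sq_abs, integral_const_mul]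

variable [Fintype ι]

theorem totalVariance_eq_sum_variance [IsFiniteMeasure μ] {V : Ω → EuclideanSpace ℝ ι}
    (hV : MemLp V 2 μ) : totalVariance V μ = ∑ k, variance (fun ω => V ω k) μ := by
  have hmean : ∀ k, (∫ ω, V ω ∂μ) k = ∫ ω, V ω k ∂μ := fun k =>
    ((EuclideanSpace.proj k).integral_comp_comm (hV.integrable one_le_two)).symm
  simp only [totalVariance, EuclideanSpace.norm_sq_eq, Real.norm_eq_abs, sq_abs,
    PiLp.sub_apply, hmean]
  refine (integral_finsetSum _ fun k _ => ?_).trans (Finset.sum_congr rfl fun k _ => ?_)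
  · exact ((hV.euclideanSpace_apply k).sub (memLp_const _)).integrable_sq
  · rw [variance_eq_integral (hV.euclideanSpace_apply k).aemeasurable]

theorem totalVariance_le_integral_norm_sq [IsProbabilityMeasure μ] {V : Ω → EuclideanSpace ℝ ι}
    (hV : MemLp V 2 μ) : totalVariance V μ ≤ ∫ ω, ‖V ω‖ ^ 2 ∂μ := by
  simp only [totalVariance_eq_sum_variance hV, EuclideanSpace.norm_sq_eq, Real.norm_eq_abs,
    sq_abs]
  rw [integral_finsetSum _ fun k _ => (hV.euclideanSpace_apply k).integrable_sq]
  exact Finset.sum_le_sum fun k _ => variance_le_expectation_sq (hV.euclideanSpace_apply k).1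

theorem IndepFun.totalVariance_sum [IsFiniteMeasure μ] {Z : κ → Ω → EuclideanSpace ℝ ι}
    {s : Finset κ} (hZ : ∀ j ∈ s, MemLp (Z j) 2 μ)
    (hindep : Set.Pairwise s fun i j => Z i ⟂ᵢ[μ] Z j) :
    totalVariance (∑ j ∈ s, Z j) μ = ∑ j ∈ s, totalVariance (Z j) μ := by
  have hproj : ∀ k : ι, Measurable fun v : EuclideanSpace ℝ ι => v k := fun k => by fun_prop
  have hindep_coord : ∀ k, Set.Pairwise s fun i j => (fun ω => Z i ω k) ⟂ᵢ[μ] fun ω => Z j ω k :=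
    fun k => hindep.mono' fun _ _ h => by exact h.comp (hproj k) (hproj k)
  have hsum := memLp_finsetSum' s hZ
  have hcoord_sum : ∀ k, (fun ω => (∑ j ∈ s, Z j) ω k) = ∑ j ∈ s, fun ω => Z j ω k := by
    intro k
    ext ω
    simp [Finset.sum_apply]
  calc totalVariance (∑ j ∈ s, Z j) μ
      = ∑ k, ∑ j ∈ s, variance (fun ω => Z j ω k) μ := by
        rw [totalVariance_eq_sum_variance hsum]
        refine Finset.sum_congr rfl fun k _ => ?_
        rw [hcoord_sum, IndepFun.variance_sum (fun j hj => (hZ j hj).euclideanSpace_apply k)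
          (hindep_coord k)]
    _ = ∑ j ∈ s, totalVariance (Z j) μ := by
        rw [Finset.sum_comm]
        exact Finset.sum_congr rfl fun j hj => (totalVariance_eq_sum_variance (hZ j hj)).symm

theorem totalVariance_average_le [IsProbabilityMeasure μ] {Z : κ → Ω → EuclideanSpace ℝ ι}
    {s : Finset κ} (hZ : ∀ j ∈ s, MemLp (Z j) 2 μ)
    (hindep : Set.Pairwise s fun i j => Z i ⟂ᵢ[μ] Z j) {v : ℝ}
    (hv : ∀ j ∈ s, ∫ ω, ‖Z j ω‖ ^ 2 ∂μ ≤ v) :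
    totalVariance (fun ω => (#s : ℝ)⁻¹ • ∑ j ∈ s, Z j ω) μ ≤ v / #s := by
  have haverage : (fun ω => (#s : ℝ)⁻¹ • ∑ j ∈ s, Z j ω) = (#s : ℝ)⁻¹ • ∑ j ∈ s, Z j := by
    ext ω
    simp [Finset.sum_apply]
  rw [haverage, totalVariance_smul, IndepFun.totalVariance_sum hZ hindep]
  calc ((#s : ℝ)⁻¹) ^ 2 * ∑ j ∈ s, totalVariance (Z j) μ
      ≤ ((#s : ℝ)⁻¹) ^ 2 * ∑ _j ∈ s, v := by
        gcongr with j hj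
        exact (totalVariance_le_integral_norm_sq (hZ j hj)).trans (hv j hj)
    _ = v / #s := by
        rw [Finset.sum_const, nsmul_eq_mul]
        rcases eq_or_ne (#s : ℝ) 0 with hs | hs
        · simp [hs]
        · field_simp

end ProbabilityTheory

theorem norm_signVec {d : ℕ} (s : Fin d → Bool) : ‖signVec d s‖ = √d := by
  simp [EuclideanSpace.norm_eq, signVec, apply_ite]

theorem norm_smul_signVec_lt {d : ℕ} {h δ : ℝ} (hh : 0 ≤ h) (hhδ : h < δ / (√d + 1))
    (s : Fin d → Bool) : ‖h • signVec d s‖ < δ := by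
  rw [norm_smul, norm_signVec, Real.norm_of_nonneg hh]
  rw [lt_div_iff₀ (by positivity)] at hhδ
  nlinarith [Real.sqrt_nonneg d]

theorem ProbabilityTheory.iIndepFun.indepFun_spFam_block {Ω : Type*} [MeasurableSpace Ω]
    {μ : Measure Ω} {d : ℕ} {Δ : ℕ → Ω → (Fin d → Bool)} {εp εm : ℕ → Ω → ℝ}
    (hIndep : @iIndepFun Ω (ℕ ⊕ ℕ ⊕ ℕ) _ (SPFam d) (spFamMS d) (spFam d Δ εp εm) μ)
    (hΔ : ∀ j, AEMeasurable (Δ j) μ) (hεp : ∀ j, AEMeasurable (εp j) μ)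
    (hεm : ∀ j, AEMeasurable (εm j) μ) {i j : ℕ} (hij : i ≠ j) :
    IndepFun (fun ω => (Δ i ω, εp i ω, εm i ω)) (fun ω => (Δ j ω, εp j ω, εm j ω)) μ := by
  let _ := spFamMS d
  let block (n : ℕ) : Finset (ℕ ⊕ ℕ ⊕ ℕ) :=
    {Sum.inl n, Sum.inr (Sum.inl n), Sum.inr (Sum.inr n)}
  have hdisj : Disjoint (block i) (block j) := by
    simp [block, hij.symm]
  have hmeas : ∀ k, AEMeasurable (spFam d Δ εp εm k) μ := by
    rintro (k | k | k)
    exacts [hΔ k, hεp k, hεm k]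
  let π (n : ℕ) (p : ∀ k : block n, SPFam d k) : (Fin d → Bool) × ℝ × ℝ :=
    (p ⟨Sum.inl n, by simp [block]⟩, p ⟨Sum.inr (Sum.inl n), by simp [block]⟩,
      p ⟨Sum.inr (Sum.inr n), by simp [block]⟩)
  have hπ : ∀ n, Measurable (π n) := fun n =>
    (measurable_pi_apply _).prodMk ((measurable_pi_apply _).prodMk (measurable_pi_apply _))
  exact (hIndep.indepFun_finset₀ _ _ hdisj hmeas).comp (hπ i) (hπ j)

section SPTerm

variable {d : ℕ} (f : EuclideanSpace ℝ (Fin d) → ℝ) (x : EuclideanSpace ℝ (Fin d)) (h : ℝ)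

/-- The summand of the estimator for the perturbation `p.1` and the noises `p.2.1`, `p.2.2`. -/
noncomputable def spTerm (p : (Fin d → Bool) × ℝ × ℝ) : EuclideanSpace ℝ (Fin d) :=
  ((f (x + h • signVec d p.1) + p.2.1 - f (x - h • signVec d p.1) - p.2.2) / (2 * h)) •
    signVec d p.1

theorem measurable_spTerm : Measurable (spTerm f x h) :=
  measurable_from_prod_countable_right fun s => by simp only [spTerm]; fun_prop

variable {f x h} {M : ℝ}

theorem norm_spTerm_sq_le (p : (Fin d → Bool) × ℝ × ℝ)
    (hplus : |f (x + h • signVec d p.1)| ≤ M) (hminus : |f (x - h • signVec d p.1)| ≤ M) :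
    ‖spTerm f x h p‖ ^ 2 ≤ 3 * d / (2 * h) ^ 2 * (4 * M ^ 2 + p.2.1 ^ 2 + p.2.2 ^ 2) := by
  set Df := f (x + h • signVec d p.1) - f (x - h • signVec d p.1)
  have hDf : Df ^ 2 ≤ 4 * M ^ 2 := by
    have h2M : |Df| ≤ 2 * M := (abs_sub _ _).trans (by linarith)
    rw [← sq_abs]
    nlinarith [abs_nonneg Df]
  have hnum : (Df + p.2.1 - p.2.2) ^ 2 ≤ 3 * (4 * M ^ 2 + p.2.1 ^ 2 + p.2.2 ^ 2) := by
    nlinarith [sq_nonneg (Df - p.2.1), sq_nonneg (Df + p.2.2), sq_nonneg (p.2.1 + p.2.2)]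
  calc ‖spTerm f x h p‖ ^ 2 = d / (2 * h) ^ 2 * (Df + p.2.1 - p.2.2) ^ 2 := by
        rw [spTerm, norm_smul, norm_signVec, mul_pow, Real.sq_sqrt d.cast_nonneg,
          Real.norm_eq_abs, sq_abs, div_pow]
        ring
    _ ≤ d / (2 * h) ^ 2 * (3 * (4 * M ^ 2 + p.2.1 ^ 2 + p.2.2 ^ 2)) := by gcongr
    _ = 3 * d / (2 * h) ^ 2 * (4 * M ^ 2 + p.2.1 ^ 2 + p.2.2 ^ 2) := by ring

variable {Ω : Type*} [MeasurableSpace Ω] {μ : Measure Ω} [IsProbabilityMeasure μ]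
  {D : Ω → Fin d → Bool} {a b : Ω → ℝ}

theorem memLp_spTerm (hD : AEMeasurable D μ) (ha : MemLp a 2 μ) (hb : MemLp b 2 μ)
    (hM : ∀ s, |f (x + h • signVec d s)| ≤ M ∧ |f (x - h • signVec d s)| ≤ M) :
    MemLp (fun ω => spTerm f x h (D ω, a ω, b ω)) 2 μ := by
  have hmeas : AEStronglyMeasurable (fun ω => spTerm f x h (D ω, a ω, b ω)) μ :=
    ((measurable_spTerm f x h).comp_aemeasurable
      (hD.prodMk (ha.aemeasurable.prodMk hb.aemeasurable))).aestronglyMeasurable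
  have hbound : Integrable (fun ω => 3 * d / (2 * h) ^ 2 * (4 * M ^ 2 + a ω ^ 2 + b ω ^ 2)) μ :=
    (((integrable_const _).add ha.integrable_sq).add hb.integrable_sq).const_mul _
  refine (memLp_two_iff_integrable_sq_norm hmeas).2 <|
    hbound.mono' (hmeas.norm.pow 2) (ae_of_all _ fun ω => ?_)
  rw [Real.norm_of_nonneg (by positivity)]
  exact norm_spTerm_sq_le _ (hM _).1 (hM _).2

theorem integral_norm_spTerm_sq_le (ha : MemLp a 2 μ) (hb : MemLp b 2 μ)
    (hM : ∀ s, |f (x + h • signVec d s)| ≤ M ∧ |f (x - h • signVec d s)| ≤ M) {σ2 : ℝ}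
    (ha0 : ∫ ω, a ω ∂μ = 0) (hb0 : ∫ ω, b ω ∂μ = 0) (haσ : variance a μ ≤ σ2)
    (hbσ : variance b μ ≤ σ2) :
    ∫ ω, ‖spTerm f x h (D ω, a ω, b ω)‖ ^ 2 ∂μ ≤ 3 * d / (2 * h) ^ 2 * (4 * M ^ 2 + 2 * σ2) := by
  rw [variance_of_integral_eq_zero ha.aemeasurable ha0] at haσ
  rw [variance_of_integral_eq_zero hb.aemeasurable hb0] at hbσ
  have hMa : Integrable (fun ω => 4 * M ^ 2 + a ω ^ 2) μ :=
    (integrable_const _).add ha.integrable_sq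
  have hMab : Integrable (fun ω => 4 * M ^ 2 + a ω ^ 2 + b ω ^ 2) μ :=
    hMa.add hb.integrable_sq
  calc ∫ ω, ‖spTerm f x h (D ω, a ω, b ω)‖ ^ 2 ∂μ
      ≤ ∫ ω, 3 * d / (2 * h) ^ 2 * (4 * M ^ 2 + a ω ^ 2 + b ω ^ 2) ∂μ :=
        integral_mono_of_nonneg (ae_of_all _ fun ω => by positivity) (hMab.const_mul _)
          (ae_of_all _ fun ω => norm_spTerm_sq_le _ (hM _).1 (hM _).2)
    _ = 3 * d / (2 * h) ^ 2 * (4 * M ^ 2 + ∫ ω, a ω ^ 2 ∂μ + ∫ ω, b ω ^ 2 ∂μ) := by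
        rw [integral_const_mul, integral_add hMa hb.integrable_sq,
          integral_add (integrable_const _) ha.integrable_sq, integral_const]
        simp
    _ ≤ 3 * d / (2 * h) ^ 2 * (4 * M ^ 2 + 2 * σ2) :=
        mul_le_mul_of_nonneg_left (by linarith) (by positivity)

end SPTerm

theorem simultaneous_perturbation_variance_general
    {Ω : Type*} [MeasurableSpace Ω] (μ : Measure Ω) [IsProbabilityMeasure μ]
    (d : ℕ) (f : EuclideanSpace ℝ (Fin d) → ℝ)
    (x : EuclideanSpace ℝ (Fin d)) (U : Set (EuclideanSpace ℝ (Fin d)))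
    (hU : IsOpen U) (hxU : x ∈ U) (hf : ContDiffOn ℝ 3 f U)
    (σ2 : ℝ)
    (Δ : ℕ → Ω → (Fin d → Bool)) (εp εm : ℕ → Ω → ℝ)
    (hΔmeas : ∀ j, Measurable (Δ j))
    (hεpL2 : ∀ j, MemLp (εp j) 2 μ) (hεmL2 : ∀ j, MemLp (εm j) 2 μ)
    (hεpMean : ∀ j, ∫ ω, εp j ω ∂μ = 0) (hεmMean : ∀ j, ∫ ω, εm j ω ∂μ = 0)
    (hεpVar : ∀ j, variance (εp j) μ ≤ σ2) (hεmVar : ∀ j, variance (εm j) μ ≤ σ2)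
    (hIndep : @iIndepFun Ω (ℕ ⊕ ℕ ⊕ ℕ) _ (SPFam d) (spFamMS d) (spFam d Δ εp εm) μ)
    (est : ℝ → ℕ → Ω → EuclideanSpace ℝ (Fin d))
    (hest : ∀ h : ℝ, ∀ ℓ : ℕ, ∀ ω : Ω,
      est h ℓ ω = (ℓ : ℝ)⁻¹ • ∑ j ∈ Finset.Icc 1 ℓ,
        ((f (x + h • signVec d (Δ j ω)) + εp j ω
            - f (x - h • signVec d (Δ j ω)) - εm j ω) / (2 * h)) • signVec d (Δ j ω)) :
    ∃ C > (0 : ℝ), ∃ h₀ > (0 : ℝ), ∀ h : ℝ, 0 < h → h < h₀ → ∀ ℓ : ℕ, 1 ≤ ℓ →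
      ∫ ω, ‖est h ℓ ω - ∫ ω', est h ℓ ω' ∂μ‖ ^ 2 ∂μ ≤ C / (ℓ * h ^ 2) := by
  obtain ⟨δ, hδ, M, hM⟩ :=
    (hf.continuousOn.continuousAt (hU.mem_nhds hxU)).exists_forall_dist_lt_abs_le
  have hσ2 : 0 ≤ σ2 := (variance_nonneg _ _).trans (hεpVar 0)
  set B := 3 * d / 4 * (4 * M ^ 2 + 2 * σ2)
  refine ⟨B + 1, by positivity, δ / (√d + 1), by positivity, fun h hh hhδ ℓ _ => ?_⟩
  have hfM : ∀ s, |f (x + h • signVec d s)| ≤ M ∧ |f (x - h • signVec d s)| ≤ M := fun s =>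
    have hs := norm_smul_signVec_lt hh.le hhδ s
    ⟨hM _ (by rwa [dist_self_add_left]), hM _ (by rwa [dist_self_sub_left])⟩
  set Z : ℕ → Ω → EuclideanSpace ℝ (Fin d) := fun j ω => spTerm f x h (Δ j ω, εp j ω, εm j ω)
  have hest' : est h ℓ = fun ω => (#(Icc 1 ℓ) : ℝ)⁻¹ • ∑ j ∈ Icc 1 ℓ, Z j ω := by
    funext ω
    simp [hest, Z, spTerm]
  have hindep : Set.Pairwise (Icc 1 ℓ : Set ℕ) fun i j => Z i ⟂ᵢ[μ] Z j := fun i _ j _ hij =>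
    (hIndep.indepFun_spFam_block (fun j => (hΔmeas j).aemeasurable)
      (fun j => (hεpL2 j).aemeasurable) (fun j => (hεmL2 j).aemeasurable) hij).comp
      (measurable_spTerm f x h) (measurable_spTerm f x h)
  calc ∫ ω, ‖est h ℓ ω - ∫ ω', est h ℓ ω' ∂μ‖ ^ 2 ∂μ = totalVariance (est h ℓ) μ := rfl
    _ ≤ 3 * d / (2 * h) ^ 2 * (4 * M ^ 2 + 2 * σ2) / #(Icc 1 ℓ) :=
        hest' ▸ totalVariance_average_le
          (fun j _ => memLp_spTerm (hΔmeas j).aemeasurable (hεpL2 j) (hεmL2 j) hfM) hindep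
          fun j _ => integral_norm_spTerm_sq_le (hεpL2 j) (hεmL2 j) hfM (hεpMean j) (hεmMean j)
            (hεpVar j) (hεmVar j)
    _ = B / (ℓ * h ^ 2) := by
        rw [Nat.card_Icc, Nat.add_sub_cancel]
        field_simp
        ring
    _ ≤ (B + 1) / (ℓ * h ^ 2) := by gcongr; linarith

/-- Variance part of Theorem 1: the simultaneous perturbation gradient estimator built from
`ℓ` independent perturbation pairs with scaling parameter `h` has variance
`E‖∇̂f(x) - E ∇̂f(x)‖² ≤ C/(ℓ h²)` for all `0 < h < h₀` and all `ℓ ≥ 1`. -/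
theorem simultaneous_perturbation_variance
    {Ω : Type*} [MeasurableSpace Ω] (μ : Measure Ω) [IsProbabilityMeasure μ]
    (d : ℕ) (f : EuclideanSpace ℝ (Fin d) → ℝ)
    (x : EuclideanSpace ℝ (Fin d)) (U : Set (EuclideanSpace ℝ (Fin d)))
    (hU : IsOpen U) (hxU : x ∈ U) (hf : ContDiffOn ℝ 3 f U)
    (σ2 : ℝ) (hσ2 : 0 ≤ σ2)
    (Δ : ℕ → Ω → (Fin d → Bool)) (εp εm : ℕ → Ω → ℝ)
    (hΔmeas : ∀ j, Measurable (Δ j))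
    (hΔunif : ∀ j, ∀ s : Fin d → Bool, μ {ω | Δ j ω = s} = ((2 : ℝ≥0∞) ^ d)⁻¹)
    (hεpL2 : ∀ j, MemLp (εp j) 2 μ) (hεmL2 : ∀ j, MemLp (εm j) 2 μ)
    (hεpMean : ∀ j, ∫ ω, εp j ω ∂μ = 0) (hεmMean : ∀ j, ∫ ω, εm j ω ∂μ = 0)
    (hεpVar : ∀ j, variance (εp j) μ ≤ σ2) (hεmVar : ∀ j, variance (εm j) μ ≤ σ2)
    (hIndep : @iIndepFun Ω (ℕ ⊕ ℕ ⊕ ℕ) _ (SPFam d) (spFamMS d) (spFam d Δ εp εm) μ)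
    (est : ℝ → ℕ → Ω → EuclideanSpace ℝ (Fin d))
    (hest : ∀ h : ℝ, ∀ ℓ : ℕ, ∀ ω : Ω,
      est h ℓ ω = (ℓ : ℝ)⁻¹ • ∑ j ∈ Finset.Icc 1 ℓ,
        ((f (x + h • signVec d (Δ j ω)) + εp j ω
            - f (x - h • signVec d (Δ j ω)) - εm j ω) / (2 * h)) • signVec d (Δ j ω)) :
    ∃ C > (0 : ℝ), ∃ h₀ > (0 : ℝ), ∀ h : ℝ, 0 < h → h < h₀ → ∀ ℓ : ℕ, 1 ≤ ℓ →
      ∫ ω, ‖est h ℓ ω - ∫ ω', est h ℓ ω' ∂μ‖ ^ 2 ∂μ ≤ C / (ℓ * h ^ 2) :=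
  simultaneous_perturbation_variance_general μ d f x U hU hxU hf σ2 Δ εp εm hΔmeas hεpL2 hεmL2
    hεpMean hεmMean hεpVar hεmVar hIndep est hest
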